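/- In the setting of Lemma 1, if additionally |θ_m| ≤ (√(c² + a² − b²) − |c|)/|x_m|, then E[(y − θ̃′ᵀx)²] ≤ E[(y − θ̃ᵀx)²]; i.e., dropping the m-th feature does not increase the expected squared error under Gaussian DP noise. -/

import Mathlib

open MeasureTheory ProbabilityTheory
open scoped NNReal ENNReal
open scoped Real


private lemma rpow_two_eq' (x : ℝ) : x ^ (2:ℝ) = x ^ 2 := by
  rw [show (2:ℝ) = ((2:ℕ):ℝ) by norm_num, Real.rpow_natCast]

private lemma integrable_sq_mul_exp_neg_mul_sq' {b : ℝ} (hb : 0 < b) :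
    Integrable (fun x : ℝ => x ^ 2 * Real.exp (-b * x ^ 2)) := by
  have h := integrable_rpow_mul_exp_neg_mul_sq hb (by norm_num : (-1:ℝ) < 2)
  simpa [rpow_two_eq'] using h

private lemma integral_sq_mul_exp_neg_mul_sq' {b : ℝ} (hb : 0 < b) :
    ∫ x : ℝ, x ^ 2 * Real.exp (-b * x ^ 2) = Real.sqrt (π / b) / (2 * b) := by
  have habs : ∫ x : ℝ, x ^ 2 * Real.exp (-b * x ^ 2)
      = 2 * ∫ x in Set.Ioi (0:ℝ), x ^ 2 * Real.exp (-b * x ^ 2) := by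
    rw [← integral_comp_abs (f := fun x => x ^ 2 * Real.exp (-b * x ^ 2))]
    congr 1 with x
    rw [sq_abs]
  have hIoi : ∫ x in Set.Ioi (0:ℝ), x ^ 2 * Real.exp (-b * x ^ 2)
      = b ^ (-(2 + 1) / 2 : ℝ) * (1 / 2) * Real.Gamma ((2 + 1) / 2) := by
    rw [← integral_rpow_mul_exp_neg_mul_rpow (by norm_num : (0:ℝ) < 2)
      (by norm_num : (-1:ℝ) < 2) hb]
    refine setIntegral_congr_fun measurableSet_Ioi (fun x _ => ?_)
    rw [rpow_two_eq']
  have hGamma : Real.Gamma ((2 + 1) / 2 : ℝ) = Real.sqrt π / 2 := by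
    rw [show ((2 + 1) / 2 : ℝ) = 1 / 2 + 1 by norm_num,
      Real.Gamma_add_one (by norm_num), Real.Gamma_one_half_eq]
    ring
  rw [habs, hIoi, hGamma]
  have h1 : b ^ (-(2 + 1) / 2 : ℝ) = (Real.sqrt b)⁻¹ * b⁻¹ := by
    rw [show (-(2 + 1) / 2 : ℝ) = (-(1/2)) + (-1) by norm_num, Real.rpow_add hb,
      Real.rpow_neg_one, Real.rpow_neg hb.le, ← Real.sqrt_eq_rpow]
  rw [h1, Real.sqrt_div Real.pi_pos.le]
  have hsb : Real.sqrt b ≠ 0 := by positivity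
  field_simp

private lemma integral_mul_exp_neg_mul_sq_eq_zero' {b : ℝ} :
    ∫ x : ℝ, x * Real.exp (-b * x ^ 2) = 0 := by
  set f : ℝ → ℝ := fun x => x * Real.exp (-b * x ^ 2) with hf
  have hneg : ∫ x : ℝ, f x = ∫ x : ℝ, f (-x) := by
    have h := (Homeomorph.neg ℝ).measurableEmbedding.integral_map (μ := volume) f
    have hm : Measure.map (⇑(Homeomorph.neg ℝ)) (volume : Measure ℝ) = volume := by
      have h0 : ⇑(Homeomorph.neg ℝ) = (Neg.neg : ℝ → ℝ) := rfl
      rw [h0, Measure.map_neg_eq_self]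
    rw [hm] at h
    simpa using h
  have h2 : ∫ x : ℝ, f (-x) = - ∫ x : ℝ, f x := by
    rw [← integral_neg]
    congr 1 with x
    simp [hf]
  linarith [hneg, h2]

private lemma gaussianReal_eq_withDensity' {v : ℝ≥0} (hv : v ≠ 0) (m : ℝ) :
    gaussianReal m v
      = (volume : Measure ℝ).withDensity
          (fun x => ((Real.toNNReal (gaussianPDFReal m v x) : ℝ≥0) : ℝ≥0∞)) := by
  rw [gaussianReal_of_var_ne_zero _ hv]
  rfl

private lemma gaussianPDFReal_zero_eq' {v : ℝ≥0} (x : ℝ) :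
    gaussianPDFReal 0 v x
      = (Real.sqrt (2 * π * v))⁻¹ * Real.exp (-(2 * (v:ℝ))⁻¹ * x ^ 2) := by
  rw [gaussianPDFReal, sub_zero]
  congr 1
  congr 1
  ring

private lemma integral_gaussianReal_zero' {v : ℝ≥0} (hv : v ≠ 0) (g : ℝ → ℝ) :
    ∫ x, g x ∂(gaussianReal 0 v)
      = ∫ x, gaussianPDFReal 0 v x * g x := by
  rw [gaussianReal_eq_withDensity' hv,
    integral_withDensity_eq_integral_smul₀
      ((measurable_gaussianPDFReal 0 v).real_toNNReal.aemeasurable) g]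
  congr 1 with x
  simp [NNReal.smul_def, Real.coe_toNNReal _ (gaussianPDFReal_nonneg 0 v x)]

private lemma integrable_gaussianReal_iff' {v : ℝ≥0} (hv : v ≠ 0) (g : ℝ → ℝ) :
    Integrable g (gaussianReal 0 v)
      ↔ Integrable (fun x => gaussianPDFReal 0 v x * g x) := by
  rw [gaussianReal_eq_withDensity' hv,
    integrable_withDensity_iff_integrable_smul₀
      ((measurable_gaussianPDFReal 0 v).real_toNNReal.aemeasurable)]
  constructor <;> intro h <;> refine h.congr (Filter.Eventually.of_forall fun x => ?_) <;>
    simp [NNReal.smul_def, Real.coe_toNNReal _ (gaussianPDFReal_nonneg 0 v x)]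

private lemma two_v_inv_pos {v : ℝ≥0} (hv : v ≠ 0) : 0 < (2 * (v:ℝ))⁻¹ := by
  have : (0:ℝ) < v := by exact_mod_cast pos_iff_ne_zero.2 hv
  positivity

private lemma integrable_sq_gaussianReal' (v : ℝ≥0) :
    Integrable (fun x : ℝ => x ^ 2) (gaussianReal 0 v) := by
  by_cases hv : v = 0
  · subst hv
    rw [gaussianReal_zero_var]
    refine ⟨(measurable_id.pow_const 2).aestronglyMeasurable, ?_⟩
    rw [HasFiniteIntegral, lintegral_dirac]
    exact ENNReal.coe_lt_top
  · rw [integrable_gaussianReal_iff' hv]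
    have h := (integrable_sq_mul_exp_neg_mul_sq' (two_v_inv_pos hv)).const_mul
      ((Real.sqrt (2 * π * v))⁻¹)
    refine h.congr (Filter.Eventually.of_forall fun x => ?_)
    simp only [gaussianPDFReal_zero_eq']
    ring

private lemma integral_sq_gaussianReal' (v : ℝ≥0) :
    ∫ x, x ^ 2 ∂(gaussianReal 0 v) = v := by
  by_cases hv : v = 0
  · subst hv; rw [gaussianReal_zero_var, integral_dirac]; norm_num
  · have hb := two_v_inv_pos hv
    have hv' : (0:ℝ) < v := by exact_mod_cast pos_iff_ne_zero.2 hv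
    rw [integral_gaussianReal_zero' hv]
    have h : ∀ x : ℝ, gaussianPDFReal 0 v x * x ^ 2
        = (Real.sqrt (2 * π * v))⁻¹ * (x ^ 2 * Real.exp (-(2 * (v:ℝ))⁻¹ * x ^ 2)) := by
      intro x; rw [gaussianPDFReal_zero_eq']; ring
    simp_rw [h]
    rw [integral_const_mul, integral_sq_mul_exp_neg_mul_sq' hb]
    have h1 : π / (2 * (v:ℝ))⁻¹ = 2 * π * v := by field_simp
    rw [h1]
    have h2 : Real.sqrt (2 * π * v) ≠ 0 := by positivity
    field_simp

private lemma integral_id_gaussianReal' (v : ℝ≥0) :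
    ∫ x, x ∂(gaussianReal 0 v) = 0 := by
  by_cases hv : v = 0
  · subst hv; rw [gaussianReal_zero_var, integral_dirac]
  · rw [integral_gaussianReal_zero' hv]
    have h : ∀ x : ℝ, gaussianPDFReal 0 v x * x
        = (Real.sqrt (2 * π * v))⁻¹ * (x * Real.exp (-(2 * (v:ℝ))⁻¹ * x ^ 2)) := by
      intro x; rw [gaussianPDFReal_zero_eq']; ring
    simp_rw [h]
    rw [integral_const_mul, integral_mul_exp_neg_mul_sq_eq_zero', mul_zero]

private lemma memℒp_two_id_gaussianReal' (v : ℝ≥0) :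
    MemLp (fun x : ℝ => x) 2 (gaussianReal 0 v) :=
  (memLp_two_iff_integrable_sq aestronglyMeasurable_id).2 (integrable_sq_gaussianReal' v)

private lemma key_second_moment {Ω : Type*} [MeasurableSpace Ω] (μ : Measure Ω)
    [IsProbabilityMeasure μ] {k : ℕ} (z : Fin k → Ω → ℝ) (v : Fin k → ℝ≥0)
    (hmeas : ∀ i, Measurable (z i))
    (hindep : iIndepFun z μ)
    (hg : ∀ i, Measure.map (z i) μ = gaussianReal 0 (v i))
    (w : Fin k → ℝ) (d : ℝ) :
    ∫ ω, (d - ∑ i, z i ω * w i) ^ 2 ∂μ = d ^ 2 + ∑ i, (v i : ℝ) * w i ^ 2 := by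
  have hℒ2 : ∀ i, MemLp (z i) 2 μ := by
    intro i
    have h := memLp_map_measure_iff (μ := μ) (f := z i) (g := fun x : ℝ => x) (p := 2)
      aestronglyMeasurable_id (hmeas i).aemeasurable
    rw [hg i] at h
    exact h.1 (memℒp_two_id_gaussianReal' (v i))
  have hmean : ∀ i, ∫ ω, z i ω ∂μ = 0 := by
    intro i
    have h := integral_map (μ := μ) (φ := z i) (hmeas i).aemeasurable
      (f := fun t : ℝ => t) aestronglyMeasurable_id
    rw [hg i, integral_id_gaussianReal'] at h
    exact h.symm
  have hsqm : ∀ i, ∫ ω, z i ω ^ 2 ∂μ = (v i : ℝ) := by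
    intro i
    have h := integral_map (μ := μ) (φ := z i) (hmeas i).aemeasurable
      (f := fun t : ℝ => t ^ 2) ((measurable_id.pow_const 2).aestronglyMeasurable)
    rw [hg i, integral_sq_gaussianReal'] at h
    exact h.symm
  have hint : ∀ i, Integrable (z i) μ := fun i => (hℒ2 i).integrable one_le_two
  have hprod : ∀ i j, Integrable (fun ω => z i ω * z j ω) μ := by
    intro i j
    by_cases hij : i = j
    · subst hij
      have h := (memLp_two_iff_integrable_sq (hℒ2 i).aestronglyMeasurable).1 (hℒ2 i)
      refine h.congr (Filter.Eventually.of_forall fun ω => ?_)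
      simp [sq]
    · exact (hindep.indepFun hij).integrable_mul (hint i) (hint j)
  have hcross : ∀ i j, i ≠ j → ∫ ω, z i ω * z j ω ∂μ = 0 := by
    intro i j hij
    have h := (hindep.indepFun hij).integral_mul_eq_mul_integral
      (hint i).aestronglyMeasurable (hint j).aestronglyMeasurable
    simpa [Pi.mul_apply, hmean i, hmean j] using h
  set S : Ω → ℝ := fun ω => ∑ i, z i ω * w i with hSdef
  have hZ : ∀ i, MemLp (fun ω => z i ω * w i) 2 μ := by
    intro i
    simpa [mul_comm] using (hℒ2 i).const_mul (w i)
  have hS : MemLp S 2 μ := memLp_finset_sum Finset.univ (fun i _ => hZ i)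
  have hSint : Integrable S μ := hS.integrable one_le_two
  have hSsq : Integrable (fun ω => S ω ^ 2) μ :=
    (memLp_two_iff_integrable_sq hS.aestronglyMeasurable).1 hS
  have hSmean : ∫ ω, S ω ∂μ = 0 := by
    rw [hSdef, integral_finset_sum Finset.univ (fun i _ => (hint i).mul_const (w i))]
    simp [integral_mul_const, hmean]
  have hSsqint : ∫ ω, S ω ^ 2 ∂μ = ∑ i, (v i : ℝ) * w i ^ 2 := by
    have hexp : ∀ ω, S ω ^ 2 = ∑ i, ∑ j, (w i * w j) * (z i ω * z j ω) := by
      intro ω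
      rw [hSdef, sq, Finset.sum_mul_sum]
      exact Finset.sum_congr rfl fun i _ => Finset.sum_congr rfl fun j _ => by ring
    simp_rw [hexp]
    rw [integral_finset_sum Finset.univ (fun i _ =>
      integrable_finset_sum Finset.univ (fun j _ => ((hprod i j).const_mul _)))]
    have hrow : ∀ i : Fin k, ∫ ω, ∑ j, (w i * w j) * (z i ω * z j ω) ∂μ
        = (v i : ℝ) * w i ^ 2 := by
      intro i
      rw [integral_finset_sum Finset.univ (fun j _ => ((hprod i j).const_mul _))]
      rw [Finset.sum_eq_single_of_mem i (Finset.mem_univ i)]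
      · rw [integral_const_mul]
        have : ∫ ω, z i ω * z i ω ∂μ = (v i : ℝ) := by
          rw [← hsqm i]
          exact integral_congr_ae (Filter.Eventually.of_forall fun ω => (sq (z i ω)).symm)
        rw [this]; ring
      · intro j _ hji
        rw [integral_const_mul, hcross i j (Ne.symm hji), mul_zero]
    exact Finset.sum_congr rfl fun i _ => hrow i
  have hexpand : ∀ ω, (d - S ω) ^ 2 = (d ^ 2 - 2 * d * S ω) + S ω ^ 2 := by
    intro ω; ring
  calc ∫ ω, (d - S ω) ^ 2 ∂μ
      = ∫ ω, ((d ^ 2 - 2 * d * S ω) + S ω ^ 2) ∂μ := by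
        exact integral_congr_ae (Filter.Eventually.of_forall fun ω => hexpand ω)
    _ = (∫ ω, (d ^ 2 - 2 * d * S ω) ∂μ) + ∫ ω, S ω ^ 2 ∂μ := by
        exact integral_add ((integrable_const _).sub (hSint.const_mul (2 * d))) hSsq
    _ = d ^ 2 + ∑ i, (v i : ℝ) * w i ^ 2 := by
        rw [integral_sub (integrable_const _) (hSint.const_mul (2 * d)),
          integral_const, integral_const_mul, hSmean, hSsqint]
        simp



/-- One-directional absolute-value form of Lemma 1: in the same setting, if additionally
`|θ_m| ≤ (√(c² + a² − b²) − |c|)/|x_m|`, then dropping the m-th feature does not increase the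
expected squared error under Gaussian DP noise. -/
theorem lemma_gaussian_noise_linear_model_abs
    {Ω : Type*} [MeasurableSpace Ω] (μ : Measure Ω) [IsProbabilityMeasure μ]
    (n : ℕ) (θ x : Fin (n + 1) → ℝ) (y : ℝ) (σ σ' : ℝ≥0)
    (z z' : Fin (n + 1) → Ω → ℝ)
    (hxm : x (Fin.last n) ≠ 0)
    (hzmeas : ∀ i, Measurable (z i)) (hz'meas : ∀ i, Measurable (z' i))
    (hzindep : iIndepFun z μ)
    (hz'indep : iIndepFun z' μ)
    (hzgauss : ∀ i, Measure.map (z i) μ = gaussianReal 0 (σ ^ 2))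
    (hz'gauss : ∀ i, i ≠ Fin.last n → Measure.map (z' i) μ = gaussianReal 0 (σ' ^ 2))
    (hz'last : z' (Fin.last n) = fun _ => 0)
    (θ' : Fin (n + 1) → ℝ) (hθ' : θ' = Function.update θ (Fin.last n) 0)
    (x' : Fin (n + 1) → ℝ) (hx' : x' = Function.update x (Fin.last n) 0)
    (c a b : ℝ)
    (hc : c = y - ∑ i, θ i * x i)
    (ha : a = (σ : ℝ) * Real.sqrt (∑ i, x i ^ 2))
    (hb : b = (σ' : ℝ) * Real.sqrt (∑ i, x' i ^ 2))
    (hab : b ^ 2 ≤ a ^ 2)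
    (hθm : |θ (Fin.last n)| ≤
      (Real.sqrt (c ^ 2 + a ^ 2 - b ^ 2) - |c|) / |x (Fin.last n)|) :
    ∫ ω, (y - ∑ i, (θ' i + z' i ω) * x i) ^ 2 ∂μ
      ≤ ∫ ω, (y - ∑ i, (θ i + z i ω) * x i) ^ 2 ∂μ := by
  -- squares of a and b
  have hxs : (0:ℝ) ≤ ∑ i, x i ^ 2 := Finset.sum_nonneg fun i _ => sq_nonneg _
  have hx's : (0:ℝ) ≤ ∑ i, x' i ^ 2 := Finset.sum_nonneg fun i _ => sq_nonneg _
  have ha2 : a ^ 2 = (σ:ℝ) ^ 2 * ∑ i, x i ^ 2 := by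
    rw [ha, mul_pow, Real.sq_sqrt hxs]
  have hb2 : b ^ 2 = (σ':ℝ) ^ 2 * ∑ i, x' i ^ 2 := by
    rw [hb, mul_pow, Real.sq_sqrt hx's]
  -- RHS
  have hptR : ∀ ω : Ω, y - ∑ i, (θ i + z i ω) * x i = c - ∑ i, z i ω * x i := by
    intro ω
    rw [hc]
    have : ∑ i, (θ i + z i ω) * x i = ∑ i, (θ i * x i + z i ω * x i) :=
      Finset.sum_congr rfl fun i _ => by ring
    rw [this, Finset.sum_add_distrib]
    ring
  have hR : ∫ ω, (y - ∑ i, (θ i + z i ω) * x i) ^ 2 ∂μ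
      = c ^ 2 + (σ:ℝ) ^ 2 * ∑ i, x i ^ 2 := by
    calc ∫ ω, (y - ∑ i, (θ i + z i ω) * x i) ^ 2 ∂μ
        = ∫ ω, (c - ∑ i, z i ω * x i) ^ 2 ∂μ := by
          exact integral_congr_ae (Filter.Eventually.of_forall fun ω => by simp only [hptR ω])
      _ = c ^ 2 + ∑ i, ((σ ^ 2 : ℝ≥0) : ℝ) * x i ^ 2 :=
          key_second_moment μ z (fun _ => σ ^ 2) hzmeas hzindep hzgauss x c
      _ = c ^ 2 + (σ:ℝ) ^ 2 * ∑ i, x i ^ 2 := by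
          rw [Finset.mul_sum]; push_cast; ring
  -- LHS
  set v' : Fin (n + 1) → ℝ≥0 := fun i => if i = Fin.last n then 0 else σ' ^ 2 with hv'
  have hg' : ∀ i, Measure.map (z' i) μ = gaussianReal 0 (v' i) := by
    intro i
    by_cases h : i = Fin.last n
    · subst h
      rw [hz'last, Measure.map_const, measure_univ, one_smul, hv']
      simp
    · rw [hv']
      simp only [h, if_false]
      exact hz'gauss i h
  set d' : ℝ := y - ∑ i, θ' i * x i with hd'
  have hptL : ∀ ω : Ω, y - ∑ i, (θ' i + z' i ω) * x i = d' - ∑ i, z' i ω * x i := by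
    intro ω
    rw [hd']
    have : ∑ i, (θ' i + z' i ω) * x i = ∑ i, (θ' i * x i + z' i ω * x i) :=
      Finset.sum_congr rfl fun i _ => by ring
    rw [this, Finset.sum_add_distrib]
    ring
  have hsum' : ∑ i, ((v' i : ℝ)) * x i ^ 2 = (σ':ℝ) ^ 2 * ∑ i, x' i ^ 2 := by
    rw [Finset.mul_sum]
    refine Finset.sum_congr rfl fun i _ => ?_
    by_cases h : i = Fin.last n
    · subst h
      simp [hv', hx']
    · simp only [hv', h, if_false, hx', Function.update_of_ne h]
      push_cast; ring
  have hL : ∫ ω, (y - ∑ i, (θ' i + z' i ω) * x i) ^ 2 ∂μ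
      = d' ^ 2 + (σ':ℝ) ^ 2 * ∑ i, x' i ^ 2 := by
    calc ∫ ω, (y - ∑ i, (θ' i + z' i ω) * x i) ^ 2 ∂μ
        = ∫ ω, (d' - ∑ i, z' i ω * x i) ^ 2 ∂μ := by
          exact integral_congr_ae (Filter.Eventually.of_forall fun ω => by simp only [hptL ω])
      _ = d' ^ 2 + ∑ i, ((v' i : ℝ)) * x i ^ 2 :=
          key_second_moment μ z' v' hz'meas hz'indep hg' x d'
      _ = d' ^ 2 + (σ':ℝ) ^ 2 * ∑ i, x' i ^ 2 := by rw [hsum']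
  -- identify d'
  have hd'c : d' = c + θ (Fin.last n) * x (Fin.last n) := by
    have h1 : ∀ i, θ' i * x i = θ i * x i -
        (if i = Fin.last n then θ (Fin.last n) * x (Fin.last n) else 0) := by
      intro i
      by_cases h : i = Fin.last n
      · subst h; simp [hθ']
      · simp [hθ', Function.update_of_ne h, h]
    have h2 : ∑ i, θ' i * x i
        = (∑ i, θ i * x i) - θ (Fin.last n) * x (Fin.last n) := by
      simp_rw [h1]
      rw [Finset.sum_sub_distrib, Finset.sum_ite_eq' Finset.univ (Fin.last n)]
      simp
    rw [hd', h2, hc]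
    ring
  -- final inequality
  rw [hL, hR, ← ha2, ← hb2, hd'c]
  have hxl : (0:ℝ) < |x (Fin.last n)| := abs_pos.2 hxm
  have h1 : |θ (Fin.last n)| * |x (Fin.last n)|
      ≤ Real.sqrt (c ^ 2 + a ^ 2 - b ^ 2) - |c| := (le_div_iff₀ hxl).1 hθm
  have h3 : (0:ℝ) ≤ c ^ 2 + a ^ 2 - b ^ 2 := by nlinarith [sq_nonneg c]
  have h2 : |c + θ (Fin.last n) * x (Fin.last n)| ≤ Real.sqrt (c ^ 2 + a ^ 2 - b ^ 2) := by
    calc |c + θ (Fin.last n) * x (Fin.last n)|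
        ≤ |c| + |θ (Fin.last n) * x (Fin.last n)| := abs_add_le _ _
      _ = |c| + |θ (Fin.last n)| * |x (Fin.last n)| := by rw [abs_mul]
      _ ≤ Real.sqrt (c ^ 2 + a ^ 2 - b ^ 2) := by linarith
  have h4 : (c + θ (Fin.last n) * x (Fin.last n)) ^ 2 ≤ c ^ 2 + a ^ 2 - b ^ 2 := by
    nlinarith [sq_abs (c + θ (Fin.last n) * x (Fin.last n)), Real.sq_sqrt h3,
      abs_nonneg (c + θ (Fin.last n) * x (Fin.last n))]
  linarith
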